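/- Let ξ be a real random variable with E[ξ] = 0 and E[ξ²] ≤ K₂, and let m > 49 with 7√m/8 - 5K₂ > 0. Then for every z ∈ ℝ, P(|ξ·1_{|ξ|≤m} - z| ≤ 1/16) ≤ max(f₁(m), f₂(m)) where f₁(m) = (m² + 4K₂ - √m)/(m² - √m/8) (valid for |z| ≤ 3/16, assuming E[|ξ|^{3/2}] = 1) and f₂(m) = (m² + 2K₂)/(m² + m/8) (valid for |z| > 3/16). -/

import Mathlib

/-!
Write `p` for the probability that the truncation `ξ₁` lies within `1/16` of `z`. Truncating at
`m` moves the mean by at most `E[ξ²]/m` and the `3/2`-moment by at most `E[ξ²]/√m`.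
If `|z| ≤ 3/16`, then `|ξ₁| ≤ 1/4` on the window, so `1 - K₂/√m ≤ E|ξ₁|^{3/2} ≤ p/8 + m^{3/2}(1-p)`.
If `|z| > 3/16`, then `sign z · ξ₁ ≥ 1/8` on the window and `≥ -m` everywhere, so
`p/8 - m(1-p) ≤ |E ξ₁| ≤ K₂/m`. Solving either inequality for `p` gives the bound.
-/

open MeasureTheory

noncomputable def truncAt (m x : ℝ) : ℝ := if |x| ≤ m then x else 0

section TruncAt

variable {m x : ℝ}

lemma measurable_truncAt : Measurable (truncAt m) :=
  Measurable.ite (measurableSet_le measurable_id.abs measurable_const) measurable_id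
    measurable_const

lemma abs_truncAt_le_abs : |truncAt m x| ≤ |x| := by
  unfold truncAt; split_ifs <;> simp

lemma abs_truncAt_le (hm : 0 ≤ m) : |truncAt m x| ≤ m := by
  unfold truncAt; split_ifs <;> simp [*]

lemma abs_sub_truncAt_le (hm : 0 < m) : |x - truncAt m x| ≤ x ^ 2 / m := by
  unfold truncAt
  split_ifs with h
  · simp only [sub_self, abs_zero]; positivity
  · rw [sub_zero, le_div_iff₀ hm, ← sq_abs]
    nlinarith [abs_nonneg x]

lemma rpow_abs_sub_rpow_abs_truncAt_le {p : ℝ} (hm : 0 < m) (hp : p ≤ 2) :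
    |x| ^ p - |truncAt m x| ^ p ≤ x ^ 2 * m ^ (p - 2) := by
  unfold truncAt
  split_ifs with h
  · simp only [sub_self]; positivity
  · have hmx : m ≤ |x| := (not_le.1 h).le
    calc |x| ^ p - |(0 : ℝ)| ^ p ≤ |x| ^ p := by
          simpa using Real.rpow_nonneg (le_refl (0 : ℝ)) p
      _ = x ^ 2 * |x| ^ (p - 2) := by
          rw [← sq_abs, ← Real.rpow_natCast, ← Real.rpow_add (hm.trans_le hmx)]; norm_num
      _ ≤ x ^ 2 * m ^ (p - 2) :=
          mul_le_mul_of_nonneg_left (Real.rpow_le_rpow_of_nonpos hm hmx (by linarith))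
            (sq_nonneg x)

end TruncAt

lemma abs_sign_mul_le (z y : ℝ) : |SignType.sign z * y| ≤ |y| := by
  rw [abs_mul]
  refine mul_le_of_le_one_left (abs_nonneg y) ?_
  rcases SignType.sign z with _ | _ | _ <;> simp

lemma abs_sub_le_sign_mul_of_abs_sub_le {y z δ : ℝ} (h : |y - z| ≤ δ) :
    |z| - δ ≤ SignType.sign z * y := by
  have := neg_abs_le (SignType.sign z * (y - z))
  have := abs_sign_mul_le z (y - z)
  have : SignType.sign z * y = |z| + SignType.sign z * (y - z) := by
    rw [mul_sub, sign_mul_self]; ring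
  linarith

lemma Real.rpow_three_halves {x : ℝ} (hx : 0 ≤ x) : x ^ (3 / 2 : ℝ) = √x ^ 3 := by
  rw [show (3 / 2 : ℝ) = 1 / 2 * (3 : ℕ) by norm_num, Real.rpow_mul hx, ← Real.sqrt_eq_rpow,
    Real.rpow_natCast]

namespace MeasureTheory

variable {Ω : Type*} [MeasurableSpace Ω] {μ : Measure Ω}

section Truncation

variable {ξ : Ω → ℝ} {m : ℝ}

lemma Integrable.truncAt (hξ : Integrable ξ μ) : Integrable (fun ω => truncAt m (ξ ω)) μ :=
  hξ.mono (measurable_truncAt.comp_aemeasurable hξ.aemeasurable).aestronglyMeasurable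
    (.of_forall fun _ => abs_truncAt_le_abs)

lemma abs_integral_sub_integral_truncAt_le (hm : 0 < m) (hξ : Integrable ξ μ)
    (hξ2 : Integrable (fun ω => ξ ω ^ 2) μ) :
    |∫ ω, ξ ω ∂μ - ∫ ω, truncAt m (ξ ω) ∂μ| ≤ (∫ ω, ξ ω ^ 2 ∂μ) / m := by
  rw [← integral_sub hξ hξ.truncAt, ← integral_div]
  exact abs_integral_le_integral_abs.trans
    (integral_mono (hξ.sub hξ.truncAt).abs (hξ2.div_const m) fun _ => abs_sub_truncAt_le hm)

lemma integrable_rpow_abs_truncAt {p : ℝ} (hp : 0 ≤ p) (hξ : AEMeasurable ξ μ)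
    (hξp : Integrable (fun ω => |ξ ω| ^ p) μ) :
    Integrable (fun ω => |truncAt m (ξ ω)| ^ p) μ :=
  hξp.mono ((measurable_truncAt.comp_aemeasurable hξ).abs.pow_const p).aestronglyMeasurable
    (.of_forall fun ω => by
      rw [Real.norm_of_nonneg (by positivity), Real.norm_of_nonneg (by positivity)]
      exact Real.rpow_le_rpow (abs_nonneg _) abs_truncAt_le_abs hp)

lemma integral_rpow_abs_le_integral_rpow_abs_truncAt_add {p : ℝ} (hm : 0 < m) (hp0 : 0 ≤ p)
    (hp : p ≤ 2) (hξ : AEMeasurable ξ μ) (hξp : Integrable (fun ω => |ξ ω| ^ p) μ)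
    (hξ2 : Integrable (fun ω => ξ ω ^ 2) μ) :
    ∫ ω, |ξ ω| ^ p ∂μ ≤ ∫ ω, |truncAt m (ξ ω)| ^ p ∂μ + m ^ (p - 2) * ∫ ω, ξ ω ^ 2 ∂μ := by
  have htrunc := integrable_rpow_abs_truncAt (m := m) hp0 hξ hξp
  rw [← integral_const_mul, ← integral_add htrunc (hξ2.const_mul _)]
  refine integral_mono hξp (htrunc.add (hξ2.const_mul _)) fun ω => ?_
  have := rpow_abs_sub_rpow_abs_truncAt_le (x := ξ ω) hm hp
  dsimp only
  linarith

end Truncation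

lemma nullMeasurableSet_abs_sub_le {Y : Ω → ℝ} {z δ : ℝ} (hY : AEMeasurable Y μ) :
    NullMeasurableSet {ω | |Y ω - z| ≤ δ} μ :=
  hY.nullMeasurableSet_preimage (s := {x | |x - z| ≤ δ})
    (measurableSet_le (by fun_prop) measurable_const)

section Concentration

variable [IsProbabilityMeasure μ] {Y : Ω → ℝ} {m z δ : ℝ}

lemma integral_le_of_le_on_of_le {A : Set Ω} {g : Ω → ℝ} {a b : ℝ}
    (hA : NullMeasurableSet A μ) (hg : Integrable g μ)
    (hgA : ∀ ω ∈ A, g ω ≤ a) (hgb : ∀ ω, g ω ≤ b) :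
    ∫ ω, g ω ∂μ ≤ a * μ.real A + b * (1 - μ.real A) := by
  rw [← integral_add_compl₀ hA hg, ← probReal_compl_eq_one_sub₀ hA]
  have hle {s : Set Ω} {c : ℝ} (hs : NullMeasurableSet s μ) (hgc : ∀ ω ∈ s, g ω ≤ c) :
      ∫ ω in s, g ω ∂μ ≤ c * μ.real s := by
    rw [mul_comm, ← smul_eq_mul, ← setIntegral_const]
    exact setIntegral_mono_on₀ hg.integrableOn integrableOn_const hs hgc
  exact add_le_add (hle hA hgA) (hle hA.compl fun ω _ => hgb ω)

lemma integral_rpow_abs_le_of_abs_le {q : ℝ} (hq : 0 ≤ q) (hY : AEMeasurable Y μ)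
    (hYq : Integrable (fun ω => |Y ω| ^ q) μ) (hYm : ∀ ω, |Y ω| ≤ m) :
    ∫ ω, |Y ω| ^ q ∂μ ≤ (|z| + δ) ^ q * μ.real {ω | |Y ω - z| ≤ δ}
      + m ^ q * (1 - μ.real {ω | |Y ω - z| ≤ δ}) := by
  refine integral_le_of_le_on_of_le (nullMeasurableSet_abs_sub_le hY) hYq
    (fun ω hω => Real.rpow_le_rpow (abs_nonneg _) ?_ hq)
    (fun ω => Real.rpow_le_rpow (abs_nonneg _) (hYm ω) hq)
  linarith [abs_sub_abs_le_abs_sub (Y ω) z, show |Y ω - z| ≤ δ from hω]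

lemma sub_le_abs_integral_of_abs_le (hY : Integrable Y μ) (hYm : ∀ ω, |Y ω| ≤ m) :
    (|z| - δ) * μ.real {ω | |Y ω - z| ≤ δ} - m * (1 - μ.real {ω | |Y ω - z| ≤ δ})
      ≤ |∫ ω, Y ω ∂μ| := by
  have h := integral_le_of_le_on_of_le (nullMeasurableSet_abs_sub_le hY.aemeasurable)
    (g := fun ω => -(SignType.sign z * Y ω)) (a := -(|z| - δ)) (b := m)
    (hY.const_mul _).neg
    (fun ω hω => neg_le_neg (abs_sub_le_sign_mul_of_abs_sub_le hω))
    (fun ω => (neg_le_abs _).trans ((abs_sign_mul_le z (Y ω)).trans (hYm ω)))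
  rw [integral_neg, integral_const_mul] at h
  have := (le_abs_self _).trans (abs_sign_mul_le z (∫ ω, Y ω ∂μ))
  linarith

end Concentration

section TruncatedConcentration

variable [IsProbabilityMeasure μ] {ξ : Ω → ℝ} {K₂ m z : ℝ}

lemma measureReal_abs_truncAt_sub_le_of_abs_le (hK₂ : 0 ≤ K₂) (hm : 1 ≤ m)
    (hξ : AEMeasurable ξ μ) (h32 : Integrable (fun ω => |ξ ω| ^ ((3 : ℝ) / 2)) μ)
    (h32e : ∫ ω, |ξ ω| ^ ((3 : ℝ) / 2) ∂μ = 1) (hξ2 : Integrable (fun ω => ξ ω ^ 2) μ)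
    (hvar : ∫ ω, ξ ω ^ 2 ∂μ ≤ K₂) (hz : |z| ≤ 3 / 16) :
    μ.real {ω | |truncAt m (ξ ω) - z| ≤ 1 / 16} ≤ (m ^ 2 + 4 * K₂ - √m) / (m ^ 2 - √m / 8) := by
  have hm0 : 0 < m := by linarith
  have hsm : 0 < √m := Real.sqrt_pos.2 hm0
  have htail := integral_rpow_abs_le_integral_rpow_abs_truncAt_add hm0 (by norm_num)
    (by norm_num) hξ h32 hξ2
  have hconc := integral_rpow_abs_le_of_abs_le (Y := fun ω => truncAt m (ξ ω)) (z := z)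
    (δ := 1 / 16) (by norm_num)
    (measurable_truncAt.comp_aemeasurable hξ) (integrable_rpow_abs_truncAt (by norm_num) hξ h32)
    (fun _ => abs_truncAt_le hm0.le)
  have hnear : (|z| + 1 / 16) ^ (3 / 2 : ℝ) ≤ 1 / 8 := calc
    _ ≤ (1 / 4 : ℝ) ^ (3 / 2 : ℝ) := by gcongr; linarith
    _ = 1 / 8 := by rw [Real.rpow_three_halves (by norm_num)]; norm_num
  rw [h32e, show (3 / 2 : ℝ) - 2 = -(1 / 2) by norm_num, Real.rpow_neg hm0.le,
    ← Real.sqrt_eq_rpow, inv_mul_eq_div] at htail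
  rw [Real.rpow_three_halves hm0.le] at hconc
  set p := μ.real {ω | |truncAt m (ξ ω) - z| ≤ 1 / 16}
  have hbound : 1 ≤ p / 8 + √m ^ 3 * (1 - p) + K₂ / √m := by
    have := mul_le_mul_of_nonneg_right hnear (measureReal_nonneg : 0 ≤ p)
    have := div_le_div_of_nonneg_right hvar hsm.le
    linarith
  have hcleared : √m ≤ p * √m / 8 + m ^ 2 * (1 - p) + K₂ := by
    have h2 := mul_le_mul_of_nonneg_left hbound hsm.le
    rw [mul_add, mul_div_cancel₀ _ hsm.ne'] at h2
    linear_combination h2 + (1 - p) * (√m ^ 2 + m) * Real.sq_sqrt hm0.le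
  have hden : 0 < m ^ 2 - √m / 8 := by
    nlinarith [Real.sqrt_le_self_iff.2 (Or.inr hm)]
  rw [le_div_iff₀ hden]
  nlinarith

lemma measureReal_abs_truncAt_sub_le_of_lt_abs (hK₂ : 0 ≤ K₂) (hm : 0 < m)
    (hξ : Integrable ξ μ) (hmean : ∫ ω, ξ ω ∂μ = 0) (hξ2 : Integrable (fun ω => ξ ω ^ 2) μ)
    (hvar : ∫ ω, ξ ω ^ 2 ∂μ ≤ K₂) (hz : 3 / 16 < |z|) :
    μ.real {ω | |truncAt m (ξ ω) - z| ≤ 1 / 16} ≤ (m ^ 2 + 2 * K₂) / (m ^ 2 + m / 8) := by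
  have htail := abs_integral_sub_integral_truncAt_le hm hξ hξ2
  rw [hmean, zero_sub, abs_neg] at htail
  have hconc := sub_le_abs_integral_of_abs_le (z := z) (δ := 1 / 16) hξ.truncAt
    (fun _ => abs_truncAt_le hm.le)
  set p := μ.real {ω | |truncAt m (ξ ω) - z| ≤ 1 / 16}
  have hbound : p / 8 - m * (1 - p) ≤ K₂ / m := by
    have := mul_le_mul_of_nonneg_right hz.le (measureReal_nonneg : 0 ≤ p)
    have := div_le_div_of_nonneg_right hvar hm.le
    linarith
  have hcleared : p * m / 8 - m ^ 2 * (1 - p) ≤ K₂ := by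
    have h2 := mul_le_mul_of_nonneg_left hbound hm.le
    rw [mul_div_cancel₀ _ hm.ne'] at h2
    linarith
  rw [le_div_iff₀ (by positivity)]
  nlinarith

end TruncatedConcentration

end MeasureTheory

theorem truncated_concentration_bound_general {Ω : Type*} [MeasurableSpace Ω]
    (μ : Measure Ω) [IsProbabilityMeasure μ]
    (ξ : Ω → ℝ) (K₂ m : ℝ) (hK₂ : 0 < K₂)
    (hint1 : Integrable ξ μ) (hmean : (∫ ω, ξ ω ∂μ) = 0)
    (h32 : Integrable (fun ω => |ξ ω| ^ ((3 : ℝ) / 2)) μ)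
    (h32e : (∫ ω, |ξ ω| ^ ((3 : ℝ) / 2) ∂μ) = 1)
    (hint2 : Integrable (fun ω => ξ ω ^ 2) μ)
    (hvar : (∫ ω, ξ ω ^ 2 ∂μ) ≤ K₂)
    (hm : 49 < m) :
    ∀ z : ℝ,
      (μ {ω | |(if |ξ ω| ≤ m then ξ ω else 0) - z| ≤ 1 / 16}).toReal ≤
        max ((m ^ 2 + 4 * K₂ - Real.sqrt m) / (m ^ 2 - Real.sqrt m / 8))
            ((m ^ 2 + 2 * K₂) / (m ^ 2 + m / 8)) := by
  intro z
  change μ.real {ω | |truncAt m (ξ ω) - z| ≤ 1 / 16} ≤ _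
  rcases le_or_gt |z| (3 / 16) with hz | hz
  · exact le_max_of_le_left <| measureReal_abs_truncAt_sub_le_of_abs_le hK₂.le (by linarith)
      hint1.aemeasurable h32 h32e hint2 hvar hz
  · exact le_max_of_le_right <| measureReal_abs_truncAt_sub_le_of_lt_abs hK₂.le (by linarith)
      hint1 hmean hint2 hvar hz

/-- concentration bound for the truncation `ξ·1_{|ξ|≤m}` of a centered
random variable with `E[|ξ|^{3/2}] = 1` and `E[ξ²] ≤ K₂`:
`P(|ξ₁ - z| ≤ 1/16) ≤ max(f₁(m), f₂(m))` for all `z`, where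
`f₁(m) = (m² + 4K₂ - √m)/(m² - √m/8)` and `f₂(m) = (m² + 2K₂)/(m² + m/8)`. -/
theorem truncated_concentration_bound {Ω : Type*} [MeasurableSpace Ω]
    (μ : Measure Ω) [IsProbabilityMeasure μ]
    (ξ : Ω → ℝ) (hξ : Measurable ξ) (K₂ m : ℝ) (hK₂ : 0 < K₂)
    (hint1 : Integrable ξ μ) (hmean : (∫ ω, ξ ω ∂μ) = 0)
    (h32 : Integrable (fun ω => |ξ ω| ^ ((3 : ℝ) / 2)) μ)
    (h32e : (∫ ω, |ξ ω| ^ ((3 : ℝ) / 2) ∂μ) = 1)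
    (hint2 : Integrable (fun ω => ξ ω ^ 2) μ)
    (hvar : (∫ ω, ξ ω ^ 2 ∂μ) ≤ K₂)
    (hm : 49 < m) (hm2 : 0 < 7 * Real.sqrt m / 8 - 5 * K₂) :
    ∀ z : ℝ,
      (μ {ω | |(if |ξ ω| ≤ m then ξ ω else 0) - z| ≤ 1 / 16}).toReal ≤
        max ((m ^ 2 + 4 * K₂ - Real.sqrt m) / (m ^ 2 - Real.sqrt m / 8))
            ((m ^ 2 + 2 * K₂) / (m ^ 2 + m / 8)) :=
  truncated_concentration_bound_general μ ξ K₂ m hK₂ hint1 hmean h32 h32e hint2 hvar hm
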